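/- arXiv:1601.00340 — 2 statements merged into one kernel-verified Lean document; each statement's English description precedes it below -/
import Mathlib

section
/- Suppose a linear action of Û = U ⋊ ℂ* on sections H⁰(X,L) has the property that for every ℂ*-normalized subgroup U' ≤ U and every ξ ∈ Lie(U) ∖ Lie(U'), the minimal-weight space of H⁰(X,L) is contained in δ_ξ(H⁰(X,L)^{U'}). Then the same property holds for H⁰(X,L^{⊗m}) for every m ≥ 1: the minimal weight space of H⁰(X,L^{⊗m}) (which has weight m·ω_min) is contained in δ_ξ(H⁰(X,L^{⊗m})^{U'}). -/
/-- A derivation kills a product all of whose factors it kills. -/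
lemma deriv_prod_eq_zero {B : Type*} [CommRing B] [Algebra ℂ B]
    (δ : B →ₗ[ℂ] B)
    (hLeib : ∀ x y : B, δ (x * y) = δ x * y + x * δ y)
    {ι : Type*} (t : Finset ι) (f : ι → B)
    (h : ∀ j ∈ t, δ (f j) = 0) : δ (∏ j ∈ t, f j) = 0 := by
  have h1 : δ 1 = 0 := by
    have h := hLeib 1 1
    simp only [mul_one, one_mul] at h
    have : δ 1 + δ 1 = δ 1 + 0 := by rw [add_zero, ← h]
    exact (add_left_cancel this)
  induction t using Finset.cons_induction with
  | empty => simpa using h1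
  | cons a s ha ih =>
    rw [Finset.prod_cons, hLeib]
    rw [h a (Finset.mem_cons_self a s), ih (fun j hj => h j (Finset.mem_cons_of_mem hj))]
    ring

/-- Semistability-coincides-with-stability persists under tensor powers.
Work in the section ring `B = ⊕_r H⁰(X, L^⊗r)`: `W1`, `Wm` are the subspaces
of sections of `L`, `L^⊗m`; `Min1`, `Minm` their minimal `ℂ*`-weight spaces;
`S` the subalgebra of `U'`-invariants; `δ = δ_ξ` the infinitesimal action,
a derivation. If the minimal weight space of `H⁰(X,L)` is contained in
`δ(H⁰(X,L)^{U'})`, then the minimal weight space of `H⁰(X,L^⊗m)` (spanned by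
products `s₁⋯s_m` of minimal-weight sections of `L`, each killed by `δ`) is
contained in `δ(H⁰(X,L^⊗m)^{U'})`. -/
theorem ss_eq_s_for_tensor_powers
    {B : Type*} [CommRing B] [Algebra ℂ B]
    (δ : B →ₗ[ℂ] B)
    (hLeib : ∀ x y : B, δ (x * y) = δ x * y + x * δ y)
    (m : ℕ) (hm : 1 ≤ m)
    (W1 Wm Min1 Minm : Submodule ℂ B) (S : Subalgebra ℂ B)
    (hMin1 : Min1 ≤ W1) (hMinm : Minm ≤ Wm)
    (hMin1S : Min1 ≤ S.toSubmodule)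
    (hmulW : ∀ f : Fin m → B, (∀ j, f j ∈ W1) → (∏ j, f j) ∈ Wm)
    (hδmin : ∀ s ∈ Min1, δ s = 0)
    (hspan : Minm ≤ Submodule.span ℂ
      {x : B | ∃ f : Fin m → B, (∀ j, f j ∈ Min1) ∧ x = ∏ j, f j})
    (hbase : Min1 ≤ Submodule.map δ (W1 ⊓ S.toSubmodule)) :
    Minm ≤ Submodule.map δ (Wm ⊓ S.toSubmodule) := by
  refine le_trans hspan ?_
  rw [Submodule.span_le]
  rintro x ⟨f, hf, rfl⟩
  have i0 : Fin m := ⟨0, hm⟩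
  obtain ⟨s', hs', hδs'⟩ := hbase (hf i0)
  -- rest of the product
  set rest : B := ∏ j ∈ Finset.univ.erase i0, f j with hrest
  have hδrest : δ rest = 0 :=
    deriv_prod_eq_zero δ hLeib _ _ (fun j _ => hδmin _ (hf j))
  refine ⟨s' * rest, ⟨?_, ?_⟩, ?_⟩
  · -- s' * rest ∈ Wm
    have := hmulW (Function.update f i0 s') (fun j => by
      by_cases hj : j = i0
      · subst hj; simpa using hs'.1
      · rw [Function.update_of_ne hj]; exact hMin1 (hf j))
    rwa [Finset.prod_update_of_mem (Finset.mem_univ i0), Finset.sdiff_singleton_eq_erase] at this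
  · -- s' * rest ∈ S
    show s' * rest ∈ S
    exact S.mul_mem hs'.2 (S.prod_mem (fun j _ => hMin1S (hf j)))
  · rw [hLeib, hδrest, hδs', mul_zero, add_zero,
      Finset.mul_prod_erase _ _ (Finset.mem_univ i0)]
end

section
/- Let the torus T₁ × T₂ = (ℂ*)² act on ℙ² × ℙ(V) with the rational weights listed as follows: for each pair (i,j) with 1 ≤ i ≤ q, 0 ≤ j ≤ l_i, the weights are (2j − l_i, a_i − 2ω₀ − 2ε), (2j − l_i, a_i − 2ω₀ − 2ε) + (N, −ℓN), and (2j − l_i, a_i − 2ω₀ − 2ε) + (−N, −ℓN), where ℓ ≥ 1, 0 < ε < 1/2, ω₀ = min_i (a_i − ℓ l_i)/2, and additionally a_i − 2ω₀ > 0 for all i. Then each weight of the first type either lies in the interior of the cone C = {(c₁,c₂) : ℓc₁ + c₂ ≥ 0, −ℓc₁ + c₂ ≥ 0, c₂ ≥ 0}, or lies outside C with ω₀ = (a_i − ℓl_i)/2 and j ∈ {0, l_i}; and for N sufficiently large, any convex hull of a subset of these weights contains 0 if and only if it contains 0 in its interior. -/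
/-- The weights of the first type `(2j − l_i, a_i − 2ω₀ − 2ε)` for the torus
`T₁ × T₂` acting on `ℙ² × ℙ(V)`. -/
noncomputable def baseWeight {q : ℕ} (a : Fin q → ℤ) (l : Fin q → ℕ)
    (ω₀ ε : ℝ) (i : Fin q) (j : ℕ) : ℝ × ℝ :=
  ((2 * (j : ℝ) - (l i : ℝ)), ((a i : ℝ) - 2 * ω₀ - 2 * ε))

/-- All the rational weights for `T₁ × T₂` on `ℙ² × ℙ(V)`, for a given `N`. -/
noncomputable def allWeights {q : ℕ} (ℓ : ℕ) (a : Fin q → ℤ) (l : Fin q → ℕ)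
    (ω₀ ε : ℝ) (N : ℕ) : Set (ℝ × ℝ) :=
  {w | ∃ (i : Fin q) (j : ℕ), j ≤ l i ∧
    (w = baseWeight a l ω₀ ε i j ∨
     w = baseWeight a l ω₀ ε i j + ((N : ℝ), -(ℓ : ℝ) * N) ∨
     w = baseWeight a l ω₀ ε i j + (-(N : ℝ), -(ℓ : ℝ) * N))}

lemma wdl_collinear (p q : ℝ × ℝ) (hp : p ≠ 0) (h : p.1 * q.2 - p.2 * q.1 = 0) :
    ∃ t : ℝ, q = t • p := by
  have hpp : p.1 ^ 2 + p.2 ^ 2 ≠ 0 := by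
    intro hz
    apply hp
    have h1 : p.1 = 0 := by nlinarith [sq_nonneg p.1, sq_nonneg p.2]
    have h2 : p.2 = 0 := by nlinarith [sq_nonneg p.1, sq_nonneg p.2]
    exact Prod.ext h1 h2
  refine ⟨(p.1 * q.1 + p.2 * q.2) / (p.1 ^ 2 + p.2 ^ 2), Prod.ext ?_ ?_⟩
  · show q.1 = (p.1 * q.1 + p.2 * q.2) / (p.1 ^ 2 + p.2 ^ 2) * p.1
    field_simp
    linear_combination (-p.2) * h
  · show q.2 = (p.1 * q.1 + p.2 * q.2) / (p.1 ^ 2 + p.2 ^ 2) * p.2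
    field_simp
    linear_combination p.1 * h

lemma wdl_int_gap (ε : ℝ) (hε₁ : 0 < ε) (hε₂ : ε < 1 / 2) (k : ℤ) :
    min (2 * ε) (1 - 2 * ε) ≤ |(k : ℝ) - 2 * ε| := by
  rcases le_or_gt k 0 with hk | hk
  · have : (k : ℝ) ≤ 0 := by exact_mod_cast hk
    rw [abs_sub_comm, abs_of_nonneg (by linarith)]
    have := min_le_left (2 * ε) (1 - 2 * ε)
    linarith
  · have : (1 : ℝ) ≤ k := by exact_mod_cast hk
    rw [abs_of_nonneg (by linarith)]
    have := min_le_right (2 * ε) (1 - 2 * ε)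
    linarith

lemma wdl_cross_aux (x x' y y' B N δ s : ℝ) (hB : 0 ≤ B)
    (hx : |x| ≤ B) (hx' : |x'| ≤ B) (hy : |y| ≤ B) (hy' : |y'| ≤ B)
    (hN : 0 ≤ N) (hgap : δ ≤ |s|) (hbig : 2 * B ^ 2 < N * δ)
    (hE : x * y' - x' * y = N * s) : False := by
  have h1 : |x * y' - x' * y| ≤ 2 * B ^ 2 := by
    calc |x * y' - x' * y| ≤ |x * y'| + |x' * y| := abs_sub _ _
      _ = |x| * |y'| + |x'| * |y| := by rw [abs_mul, abs_mul]
      _ ≤ B * B + B * B :=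
        add_le_add (mul_le_mul hx hy' (abs_nonneg _) hB) (mul_le_mul hx' hy (abs_nonneg _) hB)
      _ = 2 * B ^ 2 := by ring
  have h2 : N * δ ≤ |N * s| := by
    rw [abs_mul, abs_of_nonneg hN]
    exact mul_le_mul_of_nonneg_left hgap hN
  rw [hE] at h1
  linarith

lemma wdl_cross_ne (ℓ q : ℕ) (l : Fin q → ℕ) (ε : ℝ)
    (hε₁ : 0 < ε) (hε₂ : ε < 1 / 2)
    (b : Fin q → ℤ) (hb1 : ∀ i, 1 ≤ b i)
    (B : ℕ) (hbB : ∀ i, (b i : ℝ) ≤ B) (hlB : ∀ i, (l i : ℝ) ≤ B)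
    (N : ℕ) (hNδ : 2 * (B : ℝ) ^ 2 < N * min (2 * ε) (1 - 2 * ε))
    (i i' : Fin q) (j j' : ℕ) (hj : j ≤ l i) (hj' : j' ≤ l i')
    (σ : ℝ) (hσ : σ = 1 ∨ σ = -1) :
    (2 * (j : ℝ) - l i) * ((b i' : ℝ) - 2 * ε - ℓ * N) -
      ((b i : ℝ) - 2 * ε) * (2 * (j' : ℝ) - l i' + σ * N) ≠ 0 := by
  intro hE
  set x : ℝ := 2 * j - l i with hx_def
  set y : ℝ := (b i : ℝ) - 2 * ε with hy_def
  set x' : ℝ := 2 * j' - l i' with hx'_def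
  set y' : ℝ := (b i' : ℝ) - 2 * ε with hy'_def
  have hE' : x * y' - x' * y = (N : ℝ) * ((ℓ : ℝ) * x + σ * y) := by
    rw [hx_def, hy_def, hx'_def, hy'_def]; linear_combination hE
  have hδpos : 0 < min (2 * ε) (1 - 2 * ε) := lt_min (by linarith) (by linarith)
  have hBnn : (0 : ℝ) ≤ B := Nat.cast_nonneg B
  have hjr : (j : ℝ) ≤ l i := by exact_mod_cast hj
  have hjr' : (j' : ℝ) ≤ l i' := by exact_mod_cast hj'
  have hj0 : (0 : ℝ) ≤ j := Nat.cast_nonneg j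
  have hj0' : (0 : ℝ) ≤ j' := Nat.cast_nonneg j'
  have hxB : |x| ≤ B := abs_le.mpr ⟨by rw [hx_def]; linarith [hlB i], by rw [hx_def]; linarith [hlB i]⟩
  have hx'B : |x'| ≤ B := abs_le.mpr ⟨by rw [hx'_def]; linarith [hlB i'], by rw [hx'_def]; linarith [hlB i']⟩
  have hbi : (1 : ℝ) ≤ b i := by exact_mod_cast hb1 i
  have hbi' : (1 : ℝ) ≤ b i' := by exact_mod_cast hb1 i'
  have hyB : |y| ≤ B := abs_le.mpr ⟨by rw [hy_def]; linarith [hbB i], by rw [hy_def]; linarith [hbB i]⟩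
  have hy'B : |y'| ≤ B := abs_le.mpr ⟨by rw [hy'_def]; linarith [hbB i'], by rw [hy'_def]; linarith [hbB i']⟩
  have hgap : min (2 * ε) (1 - 2 * ε) ≤ |(ℓ : ℝ) * x + σ * y| := by
    rcases hσ with rfl | rfl
    · have he : (ℓ : ℝ) * x + 1 * y = ((ℓ * (2 * (j : ℤ) - (l i : ℤ)) + b i : ℤ) : ℝ) - 2 * ε := by
        rw [hx_def, hy_def]; push_cast; ring
      rw [he]
      exact wdl_int_gap ε hε₁ hε₂ _
    · have he : (ℓ : ℝ) * x + (-1) * y =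
          -(((b i - ℓ * (2 * (j : ℤ) - (l i : ℤ)) : ℤ) : ℝ) - 2 * ε) := by
        rw [hx_def, hy_def]; push_cast; ring
      rw [he, abs_neg]
      exact wdl_int_gap ε hε₁ hε₂ _
  exact wdl_cross_aux x x' y y' B N _ _ hBnn hxB hx'B hyB hy'B (Nat.cast_nonneg N) hgap hNδ hE'

lemma wdl_class (ℓ q : ℕ) (hℓ : 1 ≤ ℓ) (a : Fin q → ℤ) (l : Fin q → ℕ) (ε ω₀ : ℝ)
    (hε₁ : 0 < ε) (hε₂ : ε < 1 / 2)
    (b : Fin q → ℤ) (hb : ∀ i, (b i : ℝ) = (a i : ℝ) - 2 * ω₀) (hb1 : ∀ i, 1 ≤ b i)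
    (B : ℕ) (hbB : ∀ i, (b i : ℝ) ≤ B)
    (N : ℕ) (hNB : (B : ℝ) < N)
    (u : ℝ × ℝ) (hu : u ∈ allWeights ℓ a l ω₀ ε N) :
    (0 < u.2 ∧ ∃ (i : Fin q) (j : ℕ), j ≤ l i ∧
        u = (2 * (j : ℝ) - (l i : ℝ), (b i : ℝ) - 2 * ε)) ∨
    (u.2 < 0 ∧ ∃ (i : Fin q) (j : ℕ) (σ : ℝ), j ≤ l i ∧ (σ = 1 ∨ σ = -1) ∧
        u = (2 * (j : ℝ) - (l i : ℝ) + σ * N, (b i : ℝ) - 2 * ε - (ℓ : ℝ) * N)) := by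
  obtain ⟨i, j, hj, h⟩ := hu
  have hbi : (1 : ℝ) ≤ b i := by exact_mod_cast hb1 i
  have hba : (b i : ℝ) = (a i : ℝ) - 2 * ω₀ := hb i
  have hNl : (N : ℝ) ≤ (ℓ : ℝ) * N := by
    have h1 : (1 : ℝ) ≤ (ℓ : ℝ) := by exact_mod_cast hℓ
    nlinarith [Nat.cast_nonneg (α := ℝ) N]
  rcases h with h | h | h
  · left
    constructor
    · rw [h]
      show (0 : ℝ) < (a i : ℝ) - 2 * ω₀ - 2 * ε
      linarith
    · exact ⟨i, j, hj, by rw [h]; unfold baseWeight; exact Prod.ext rfl (by simp; linarith)⟩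
  · right
    constructor
    · rw [h]
      show (a i : ℝ) - 2 * ω₀ - 2 * ε + (-(ℓ : ℝ) * N) < 0
      linarith [hbB i]
    · exact ⟨i, j, 1, hj, Or.inl rfl, by
        rw [h]; unfold baseWeight
        rw [Prod.mk_add_mk]
        exact Prod.ext (by simp) (by simp; linarith)⟩
  · right
    constructor
    · rw [h]
      show (a i : ℝ) - 2 * ω₀ - 2 * ε + (-(ℓ : ℝ) * N) < 0
      linarith [hbB i]
    · exact ⟨i, j, -1, hj, Or.inr rfl, by
        rw [h]; unfold baseWeight
        rw [Prod.mk_add_mk]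
        exact Prod.ext (by simp; try ring) (by simp; linarith)⟩

lemma wdl_triangle (S : Set (ℝ × ℝ)) (u v z : ℝ × ℝ)
    (hu : u ∈ convexHull ℝ S) (hv : v ∈ convexHull ℝ S) (hz : z ∈ convexHull ℝ S)
    (c₁ c₂ c₃ : ℝ) (h1 : 0 < c₁) (h2 : 0 < c₂) (h3 : 0 < c₃)
    (hsum : c₁ + c₂ + c₃ = 1)
    (hcomb : c₁ • u + c₂ • v + c₃ • z = (0 : ℝ × ℝ))
    (hcross : u.1 * v.2 - u.2 * v.1 ≠ 0) :
    (0 : ℝ × ℝ) ∈ interior (convexHull ℝ S) := by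
  have hcomb1 : c₁ * u.1 + c₂ * v.1 + c₃ * z.1 = 0 := by
    have := congrArg Prod.fst hcomb; simpa using this
  have hcomb2 : c₁ * u.2 + c₂ * v.2 + c₃ * z.2 = 0 := by
    have := congrArg Prod.snd hcomb; simpa using this
  set d : ℝ := (u.1 - z.1) * (v.2 - z.2) - (u.2 - z.2) * (v.1 - z.1) with hd_def
  have hd : c₃ * d = u.1 * v.2 - u.2 * v.1 := by
    rw [hd_def]
    linear_combination (u.2 - v.2) * hcomb1 + (v.1 - u.1) * hcomb2 +
      (u.1 * v.2 - u.2 * v.1) * hsum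
  have hd0 : d ≠ 0 := by
    intro h
    exact hcross (by rw [← hd, h, mul_zero])
  set A : (ℝ × ℝ) → ℝ := fun x => ((x.1 - z.1) * (v.2 - z.2) - (x.2 - z.2) * (v.1 - z.1)) / d
    with hA_def
  set Bf : (ℝ × ℝ) → ℝ := fun x => ((u.1 - z.1) * (x.2 - z.2) - (u.2 - z.2) * (x.1 - z.1)) / d
    with hB_def
  have hA : Continuous A := by
    apply Continuous.div_const; fun_prop
  have hB : Continuous Bf := by
    apply Continuous.div_const; fun_prop
  have hA0 : A 0 = c₁ := by
    rw [hA_def]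
    simp only [Prod.fst_zero, Prod.snd_zero]
    rw [div_eq_iff hd0, hd_def]
    linear_combination (z.2 - v.2) * hcomb1 + (v.1 - z.1) * hcomb2 +
      ((v.2 - z.2) * z.1 - (v.1 - z.1) * z.2) * hsum
  have hB0 : Bf 0 = c₂ := by
    rw [hB_def]
    simp only [Prod.fst_zero, Prod.snd_zero]
    rw [div_eq_iff hd0, hd_def]
    linear_combination (u.2 - z.2) * hcomb1 + (z.1 - u.1) * hcomb2 +
      ((u.1 - z.1) * z.2 - (u.2 - z.2) * z.1) * hsum
  set U : Set (ℝ × ℝ) :=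
    A ⁻¹' Set.Ioi 0 ∩ Bf ⁻¹' Set.Ioi 0 ∩ (fun x => A x + Bf x) ⁻¹' Set.Iio 1 with hU_def
  have hUopen : IsOpen U := by
    apply IsOpen.inter
    apply IsOpen.inter
    · exact isOpen_Ioi.preimage hA
    · exact isOpen_Ioi.preimage hB
    · exact isOpen_Iio.preimage (hA.add hB)
  have hU0 : (0 : ℝ × ℝ) ∈ U := by
    refine ⟨⟨?_, ?_⟩, ?_⟩ <;>
      simp only [Set.mem_preimage, Set.mem_Ioi, Set.mem_Iio, hA0, hB0]
    · exact h1
    · exact h2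
    · linarith
  have hUsub : U ⊆ convexHull ℝ S := by
    rintro x ⟨⟨hxa, hxb⟩, hxab⟩
    simp only [Set.mem_preimage, Set.mem_Ioi, Set.mem_Iio] at hxa hxb hxab
    have hxeq : x = A x • u + Bf x • v + (1 - A x - Bf x) • z := by
      have e1 : x.1 = A x * u.1 + Bf x * v.1 + (1 - A x - Bf x) * z.1 := by
        rw [hA_def, hB_def]
        field_simp
        try ring
      have e2 : x.2 = A x * u.2 + Bf x * v.2 + (1 - A x - Bf x) * z.2 := by
        rw [hA_def, hB_def]
        field_simp
        try ring
      exact Prod.ext (by simpa using e1) (by simpa using e2)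
    have hmem := (convex_convexHull ℝ S).sum_mem (t := (Finset.univ : Finset (Fin 3)))
      (w := ![A x, Bf x, 1 - A x - Bf x]) (z := ![u, v, z])
      (by intro i _; fin_cases i <;> simp <;> linarith)
      (by simp [Fin.sum_univ_three]; try ring)
      (by intro i _; fin_cases i <;> simpa)
    simp only [Fin.sum_univ_three] at hmem
    rw [hxeq]
    simpa using hmem
  exact mem_interior.mpr ⟨U, hUsub, hUopen, hU0⟩

lemma wdl_opp (ℓ q : ℕ) (hℓ : 1 ≤ ℓ) (a : Fin q → ℤ) (l : Fin q → ℕ) (ε ω₀ : ℝ)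
    (hε₁ : 0 < ε) (hε₂ : ε < 1 / 2)
    (b : Fin q → ℤ) (hb : ∀ i, (b i : ℝ) = (a i : ℝ) - 2 * ω₀) (hb1 : ∀ i, 1 ≤ b i)
    (B : ℕ) (hbB : ∀ i, (b i : ℝ) ≤ B) (hlB : ∀ i, (l i : ℝ) ≤ B)
    (N : ℕ) (hNB : (B : ℝ) < N)
    (hNδ : 2 * (B : ℝ) ^ 2 < N * min (2 * ε) (1 - 2 * ε))
    (w w' : ℝ × ℝ) (hw : w ∈ allWeights ℓ a l ω₀ ε N)
    (hw' : w' ∈ allWeights ℓ a l ω₀ ε N)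
    (t : ℝ) (ht : t < 0) (heq : w' = t • w) : False := by
  have h1 : w'.1 = t * w.1 := by rw [heq]; simp
  have h2 : w'.2 = t * w.2 := by rw [heq]; simp
  have hcross : w.1 * w'.2 - w.2 * w'.1 = 0 := by rw [h1, h2]; ring
  rcases wdl_class ℓ q hℓ a l ε ω₀ hε₁ hε₂ b hb hb1 B hbB N hNB w hw with
    ⟨hy, i, j, hj, hwe⟩ | ⟨hy, i, j, σ, hj, hσ, hwe⟩ <;>
    rcases wdl_class ℓ q hℓ a l ε ω₀ hε₁ hε₂ b hb hb1 B hbB N hNB w' hw' with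
      ⟨hy', i', j', hj', hwe'⟩ | ⟨hy', i', j', σ', hj', hσ', hwe'⟩
  · nlinarith
  · rw [hwe, hwe'] at hcross
    simp only [] at hcross
    exact wdl_cross_ne ℓ q l ε hε₁ hε₂ b hb1 B hbB hlB N hNδ i i' j j' hj hj' σ' hσ' hcross
  · have hcross2 : w'.1 * w.2 - w'.2 * w.1 = 0 := by linear_combination -hcross
    rw [hwe, hwe'] at hcross2
    simp only [] at hcross2
    exact wdl_cross_ne ℓ q l ε hε₁ hε₂ b hb1 B hbB hlB N hNδ i' i j' j hj' hj σ hσ hcross2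
  · nlinarith

/-- Combinatorial core of Lemma 2.8: each weight of the first type either lies
in the interior of the cone `C = {ℓc₁+c₂ ≥ 0, −ℓc₁+c₂ ≥ 0, c₂ ≥ 0}`, or lies
outside `C` with `ω₀ = (a_i − ℓl_i)/2` and `j ∈ {0, l_i}`; and for `N`
sufficiently large, `0` lies in the convex hull of any subset of the weights
iff it lies in its interior. -/
theorem weight_distribution_lemma (ℓ q : ℕ) (hℓ : 1 ≤ ℓ)
    (a : Fin q → ℤ) (l : Fin q → ℕ) (ε ω₀ : ℝ)
    (hε₁ : 0 < ε) (hε₂ : ε < 1 / 2)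
    (hω₀min : ∀ i : Fin q, ω₀ ≤ ((a i : ℝ) - (ℓ : ℝ) * (l i : ℝ)) / 2)
    (hω₀ex : ∃ i : Fin q, ω₀ = ((a i : ℝ) - (ℓ : ℝ) * (l i : ℝ)) / 2)
    (hpos : ∀ i : Fin q, 0 < (a i : ℝ) - 2 * ω₀) :
    (∀ (i : Fin q) (j : ℕ), j ≤ l i →
      (let w := baseWeight a l ω₀ ε i j
       ((ℓ : ℝ) * w.1 + w.2 > 0 ∧ -(ℓ : ℝ) * w.1 + w.2 > 0 ∧ w.2 > 0) ∨
       (¬ ((ℓ : ℝ) * w.1 + w.2 ≥ 0 ∧ -(ℓ : ℝ) * w.1 + w.2 ≥ 0 ∧ w.2 ≥ 0) ∧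
         ω₀ = ((a i : ℝ) - (ℓ : ℝ) * (l i : ℝ)) / 2 ∧ (j = 0 ∨ j = l i)))) ∧
    (∃ N₀ : ℕ, ∀ N : ℕ, N₀ ≤ N → ∀ S : Set (ℝ × ℝ),
      S ⊆ allWeights ℓ a l ω₀ ε N →
      ((0 : ℝ × ℝ) ∈ convexHull ℝ S ↔
        (0 : ℝ × ℝ) ∈ interior (convexHull ℝ S))) := by
  classical
  obtain ⟨i₀, hi₀⟩ := hω₀ex
  have h2ω : 2 * ω₀ = (a i₀ : ℝ) - (ℓ : ℝ) * (l i₀ : ℝ) := by rw [hi₀]; ring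
  set b : Fin q → ℤ := fun i => a i - a i₀ + (ℓ : ℤ) * (l i₀ : ℤ) with hb_def
  have hb : ∀ i, (b i : ℝ) = (a i : ℝ) - 2 * ω₀ := by
    intro i; rw [hb_def]; push_cast; rw [h2ω]; ring
  have hb1 : ∀ i, 1 ≤ b i := by
    intro i
    have h1 : (0 : ℝ) < (b i : ℝ) := by rw [hb i]; exact hpos i
    have : (0 : ℤ) < b i := by exact_mod_cast h1
    omega
  have hℓ1 : (1 : ℝ) ≤ (ℓ : ℝ) := by exact_mod_cast hℓ
  constructor
  · -- Part 1
    intro i j hj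
    have hjr : (j : ℝ) ≤ (l i : ℝ) := by exact_mod_cast hj
    have hj0 : (0 : ℝ) ≤ (j : ℝ) := Nat.cast_nonneg j
    have hl0 : (0 : ℝ) ≤ (l i : ℝ) := Nat.cast_nonneg _
    have hbi : (1 : ℝ) ≤ (b i : ℝ) := by exact_mod_cast hb1 i
    have hba : (b i : ℝ) = (a i : ℝ) - 2 * ω₀ := hb i
    -- the nonnegative "slack" K = a_i - 2ω₀ - ℓ l_i
    have hK0 : (0 : ℝ) ≤ (a i : ℝ) - 2 * ω₀ - (ℓ : ℝ) * (l i : ℝ) := by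
      have := hω₀min i; linarith
    have hKint : ∃ m : ℤ, (m : ℝ) = (a i : ℝ) - 2 * ω₀ - (ℓ : ℝ) * (l i : ℝ) := by
      refine ⟨b i - (ℓ : ℤ) * (l i : ℤ), ?_⟩
      push_cast
      rw [hba]
      try ring
    obtain ⟨m, hm⟩ := hKint
    have hm0 : 0 ≤ m := by
      have : (0 : ℝ) ≤ (m : ℝ) := by rw [hm]; exact hK0
      exact_mod_cast this
    show ((ℓ : ℝ) * (2 * (j : ℝ) - (l i : ℝ)) + ((a i : ℝ) - 2 * ω₀ - 2 * ε) > 0 ∧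
        -(ℓ : ℝ) * (2 * (j : ℝ) - (l i : ℝ)) + ((a i : ℝ) - 2 * ω₀ - 2 * ε) > 0 ∧
        (a i : ℝ) - 2 * ω₀ - 2 * ε > 0) ∨
      (¬ ((ℓ : ℝ) * (2 * (j : ℝ) - (l i : ℝ)) + ((a i : ℝ) - 2 * ω₀ - 2 * ε) ≥ 0 ∧
        -(ℓ : ℝ) * (2 * (j : ℝ) - (l i : ℝ)) + ((a i : ℝ) - 2 * ω₀ - 2 * ε) ≥ 0 ∧
        (a i : ℝ) - 2 * ω₀ - 2 * ε ≥ 0) ∧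
        ω₀ = ((a i : ℝ) - (ℓ : ℝ) * (l i : ℝ)) / 2 ∧ (j = 0 ∨ j = l i))
    rcases eq_or_lt_of_le hm0 with hmz | hmpos
    · -- K = 0, i.e. ω₀ = (a_i - ℓ l_i)/2
      have hKz : (a i : ℝ) - 2 * ω₀ - (ℓ : ℝ) * (l i : ℝ) = 0 := by
        rw [← hm, ← hmz]; simp
      have hωeq : ω₀ = ((a i : ℝ) - (ℓ : ℝ) * (l i : ℝ)) / 2 := by linarith
      by_cases hjz : j = 0
      · right
        refine ⟨?_, hωeq, Or.inl hjz⟩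
        rintro ⟨hA, -, -⟩
        subst hjz
        simp only [Nat.cast_zero] at hA
        have e : (ℓ : ℝ) * (2 * 0 - (l i : ℝ)) = -((ℓ : ℝ) * (l i : ℝ)) := by ring
        linarith
      · by_cases hjl : j = l i
        · right
          refine ⟨?_, hωeq, Or.inr hjl⟩
          rintro ⟨-, hB, -⟩
          subst hjl
          have e : -(ℓ : ℝ) * (2 * ((l i : ℕ) : ℝ) - (l i : ℝ)) = -((ℓ : ℝ) * (l i : ℝ)) := by
            ring
          linarith
        · left
          have hj1 : (1 : ℝ) ≤ (j : ℝ) := by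
            have : 1 ≤ j := Nat.one_le_iff_ne_zero.mpr hjz
            exact_mod_cast this
          have hjl1 : (j : ℝ) + 1 ≤ (l i : ℝ) := by
            have : j + 1 ≤ l i := lt_of_le_of_ne hj (by exact_mod_cast hjl)
            exact_mod_cast this
          have q1 : (1 : ℝ) ≤ (ℓ : ℝ) * (j : ℝ) := by
            nlinarith [mul_nonneg (sub_nonneg.mpr hℓ1) (sub_nonneg.mpr hj1)]
          have q2 : (1 : ℝ) ≤ (ℓ : ℝ) * ((l i : ℝ) - (j : ℝ)) := by
            nlinarith [mul_nonneg (sub_nonneg.mpr hℓ1)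
              (by linarith : (0 : ℝ) ≤ (l i : ℝ) - (j : ℝ) - 1)]
          have q3 : (1 : ℝ) ≤ (ℓ : ℝ) * (l i : ℝ) := by
            nlinarith [mul_nonneg (sub_nonneg.mpr hℓ1) (by linarith : (0 : ℝ) ≤ (l i : ℝ) - 1)]
          have e1 : (ℓ : ℝ) * (2 * (j : ℝ) - (l i : ℝ)) =
              2 * ((ℓ : ℝ) * (j : ℝ)) - (ℓ : ℝ) * (l i : ℝ) := by ring
          have e2 : -(ℓ : ℝ) * (2 * (j : ℝ) - (l i : ℝ)) =
              2 * ((ℓ : ℝ) * ((l i : ℝ) - (j : ℝ))) - (ℓ : ℝ) * (l i : ℝ) := by ring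
          refine ⟨by linarith, by linarith, by linarith⟩
    · -- K ≥ 1
      have hK1 : (1 : ℝ) ≤ (a i : ℝ) - 2 * ω₀ - (ℓ : ℝ) * (l i : ℝ) := by
        rw [← hm]
        exact_mod_cast hmpos
      left
      have hℓ0 : (0 : ℝ) ≤ (ℓ : ℝ) := by linarith
      have p1 : (0 : ℝ) ≤ (ℓ : ℝ) * (j : ℝ) := mul_nonneg hℓ0 hj0
      have p2 : (0 : ℝ) ≤ (ℓ : ℝ) * ((l i : ℝ) - (j : ℝ)) := mul_nonneg hℓ0 (by linarith)
      have p3 : (0 : ℝ) ≤ (ℓ : ℝ) * (l i : ℝ) := mul_nonneg hℓ0 hl0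
      have e1 : (ℓ : ℝ) * (2 * (j : ℝ) - (l i : ℝ)) =
          2 * ((ℓ : ℝ) * (j : ℝ)) - (ℓ : ℝ) * (l i : ℝ) := by ring
      have e2 : -(ℓ : ℝ) * (2 * (j : ℝ) - (l i : ℝ)) =
          2 * ((ℓ : ℝ) * ((l i : ℝ) - (j : ℝ))) - (ℓ : ℝ) * (l i : ℝ) := by ring
      refine ⟨by linarith, by linarith, by linarith⟩
  · -- Part 2
    have hδ : 0 < min (2 * ε) (1 - 2 * ε) := lt_min (by linarith) (by linarith)
    obtain ⟨B, hbB, hlB⟩ : ∃ B : ℕ, (∀ i, (b i : ℝ) ≤ B) ∧ ∀ i, (l i : ℝ) ≤ B := by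
      refine ⟨Finset.univ.sup (fun i => (b i).toNat ⊔ l i), ?_, ?_⟩
      · intro i
        have h1 : (b i).toNat ⊔ l i ≤ Finset.univ.sup (fun i => (b i).toNat ⊔ l i) :=
          Finset.le_sup (f := fun i => (b i).toNat ⊔ l i) (Finset.mem_univ i)
        have h2 : (b i).toNat ≤ Finset.univ.sup (fun i => (b i).toNat ⊔ l i) :=
          le_trans (le_max_left _ _) h1
        have h3 : (b i : ℝ) = (((b i).toNat : ℕ) : ℝ) := by
          have := hb1 i
          norm_cast
          omega
        rw [h3]
        exact_mod_cast h2
      · intro i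
        have h1 : (b i).toNat ⊔ l i ≤ Finset.univ.sup (fun i => (b i).toNat ⊔ l i) :=
          Finset.le_sup (f := fun i => (b i).toNat ⊔ l i) (Finset.mem_univ i)
        have h2 : l i ≤ Finset.univ.sup (fun i => (b i).toNat ⊔ l i) :=
          le_trans (le_max_right _ _) h1
        exact_mod_cast h2
    obtain ⟨N₀, hN₀⟩ := exists_nat_gt
      (max (B : ℝ) ((2 * (B : ℝ) ^ 2 + 1) / min (2 * ε) (1 - 2 * ε)))
    refine ⟨N₀, fun N hN S hS => ?_⟩
    have hNr : (N₀ : ℝ) ≤ (N : ℝ) := by exact_mod_cast hN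
    have hNB : (B : ℝ) < N := lt_of_lt_of_le (lt_of_le_of_lt (le_max_left _ _) hN₀) hNr
    have hNδ : 2 * (B : ℝ) ^ 2 < N * min (2 * ε) (1 - 2 * ε) := by
      have h1 : (2 * (B : ℝ) ^ 2 + 1) / min (2 * ε) (1 - 2 * ε) < N :=
        lt_of_lt_of_le (lt_of_le_of_lt (le_max_right _ _) hN₀) hNr
      rw [div_lt_iff₀ hδ] at h1
      nlinarith
    constructor
    swap
    · exact fun h => interior_subset h
    intro h0
    rw [convexHull_eq] at h0
    obtain ⟨ι, tf, c, p, hc0, hc1, hpS, hcm⟩ := h0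
    rw [Finset.centerMass_eq_of_sum_1 _ _ hc1] at hcm
    set T : Finset ι := tf.filter (fun i => 0 < c i) with hT_def
    have hTsub : T ⊆ tf := Finset.filter_subset _ _
    have hcT : ∑ i ∈ T, c i = 1 := by
      rw [hT_def]
      rw [Finset.sum_filter_of_ne (fun i hi hne => lt_of_le_of_ne (hc0 i hi) (Ne.symm hne))]
      exact hc1
    have hsumT : ∑ i ∈ T, c i • p i = 0 := by
      rw [hT_def]
      rw [Finset.sum_filter_of_ne ?_]
      · exact hcm
      · intro i hi hne
        rcases eq_or_lt_of_le (hc0 i hi) with h | h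
        · exact absurd (by rw [← h, zero_smul]) hne
        · exact h
    have hpW : ∀ i ∈ T, p i ∈ allWeights ℓ a l ω₀ ε N := fun i hi => hS (hpS i (hTsub hi))
    have hcTpos : ∀ i ∈ T, 0 < c i := fun i hi => (Finset.mem_filter.mp hi).2
    have hp0 : ∀ i ∈ T, p i ≠ 0 := by
      intro i hi h
      rcases wdl_class ℓ q hℓ a l ε ω₀ hε₁ hε₂ b hb hb1 B hbB N hNB (p i) (hpW i hi) with
        ⟨h2, -⟩ | ⟨h2, -⟩ <;> rw [h] at h2 <;> simp at h2
    clear_value T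
    by_cases hcol : ∀ j ∈ T, ∀ k ∈ T, (p j).1 * (p k).2 - (p j).2 * (p k).1 = 0
    · exfalso
      have hTne : T.Nonempty := by
        by_contra h
        rw [Finset.not_nonempty_iff_eq_empty] at h
        rw [h, Finset.sum_empty] at hcT
        norm_num at hcT
      obtain ⟨j₀, hj₀⟩ := hTne
      have hex : ∀ k ∈ T, ∃ s : ℝ, p k = s • p j₀ := fun k hk =>
        wdl_collinear _ _ (hp0 j₀ hj₀) (hcol j₀ hj₀ k hk)
      choose! t' ht' using hex
      have hts : (∑ k ∈ T, c k * t' k) • p j₀ = 0 := by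
        rw [Finset.sum_smul, ← hsumT]
        refine Finset.sum_congr rfl fun k hk => ?_
        rw [ht' k hk, smul_smul]
      have hts0 : ∑ k ∈ T, c k * t' k = 0 := by
        rcases smul_eq_zero.mp hts with h | h
        · exact h
        · exact absurd h (hp0 j₀ hj₀)
      have htj₀ : t' j₀ = 1 := by
        by_contra hne
        have h1 : (t' j₀ - 1) • p j₀ = 0 := by
          rw [sub_smul, one_smul, ← ht' j₀ hj₀, sub_self]
        rcases smul_eq_zero.mp h1 with h | h
        · exact hne (by linarith [sub_eq_zero.mp h])
        · exact hp0 j₀ hj₀ h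
      have hneg : ∃ k ∈ T, t' k < 0 := by
        by_contra h
        push_neg at h
        have hpos' : 0 < ∑ k ∈ T, c k * t' k :=
          Finset.sum_pos' (fun k hk => mul_nonneg (hcTpos k hk).le (h k hk))
            ⟨j₀, hj₀, by rw [htj₀, mul_one]; exact hcTpos j₀ hj₀⟩
        linarith
      obtain ⟨k, hk, htk⟩ := hneg
      exact wdl_opp ℓ q hℓ a l ε ω₀ hε₁ hε₂ b hb hb1 B hbB hlB N hNB hNδ
        (p j₀) (p k) (hpW j₀ hj₀) (hpW k hk) (t' k) htk (ht' k hk)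
    · push_neg at hcol
      obtain ⟨j, hj, k, hk, hcr⟩ := hcol
      have hjk : j ≠ k := by rintro rfl; exact hcr (by ring)
      set T' : Finset ι := (T.erase j).erase k with hT'_def
      have hT'T : T' ⊆ T := (Finset.erase_subset _ _).trans (Finset.erase_subset _ _)
      have hkTj : k ∈ T.erase j := Finset.mem_erase.mpr ⟨fun h => hjk h.symm, hk⟩
      have hsplitc : c j + (c k + ∑ i ∈ T', c i) = 1 := by
        rw [hT'_def, Finset.add_sum_erase _ c hkTj, Finset.add_sum_erase _ c hj, hcT]
      have hsplitp : c j • p j + (c k • p k + ∑ i ∈ T', c i • p i) = 0 := by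
        rw [hT'_def, Finset.add_sum_erase _ (fun i => c i • p i) hkTj,
          Finset.add_sum_erase _ (fun i => c i • p i) hj, hsumT]
      clear_value T'
      set c₃ : ℝ := ∑ i ∈ T', c i with hc₃_def
      have hc₃0 : 0 ≤ c₃ := Finset.sum_nonneg fun i hi => (hcTpos i (hT'T hi)).le
      rcases eq_or_lt_of_le hc₃0 with hc₃z | hc₃pos
      · exfalso
        have hT'empty : ∀ i ∈ T', False := by
          intro i hi
          have h1 : c i ≤ c₃ :=
            Finset.single_le_sum (fun i' hi' => (hcTpos i' (hT'T hi')).le) hi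
          linarith [hcTpos i (hT'T hi)]
        have hzero : ∑ i ∈ T', c i • p i = 0 :=
          Finset.sum_eq_zero fun i hi => absurd (hT'empty i hi) not_false
        rw [hzero, add_zero] at hsplitp
        have e1 : c j * (p j).1 + c k * (p k).1 = 0 := by
          have := congrArg Prod.fst hsplitp; simpa using this
        have e2 : c j * (p j).2 + c k * (p k).2 = 0 := by
          have := congrArg Prod.snd hsplitp; simpa using this
        have hcz : c k * ((p j).1 * (p k).2 - (p j).2 * (p k).1) = 0 := by
          linear_combination (p j).1 * e2 - (p j).2 * e1
        exact hcr ((mul_eq_zero.mp hcz).resolve_left (ne_of_gt (hcTpos k hk)))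
      · set z : ℝ × ℝ := T'.centerMass c p with hz_def
        have hzmem : z ∈ convexHull ℝ S :=
          T'.centerMass_mem_convexHull (fun i hi => (hcTpos i (hT'T hi)).le)
            (by rw [← hc₃_def]; exact hc₃pos) (fun i hi => hpS i (hTsub (hT'T hi)))
        have hzsum : c₃ • z = ∑ i ∈ T', c i • p i := by
          rw [hz_def, Finset.centerMass, ← hc₃_def, smul_inv_smul₀ (ne_of_gt hc₃pos)]
        clear_value c₃ z
        have hcomb : c j • p j + c k • p k + c₃ • z = 0 := by
          rw [hzsum, add_assoc]
          exact hsplitp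
        have hsum3 : c j + c k + c₃ = 1 := by linear_combination hsplitc
        exact wdl_triangle S (p j) (p k) z (subset_convexHull ℝ S (hpS j (hTsub hj)))
          (subset_convexHull ℝ S (hpS k (hTsub hk))) hzmem (c j) (c k) c₃
          (hcTpos j hj) (hcTpos k hk) hc₃pos hsum3 hcomb hcr
end
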